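/- arXiv:1012.1062 — 3 statements merged into one kernel-verified Lean document; each statement's English description precedes it below -/
import Mathlib

section
/- In the Gauss decomposition T(u) = F(u)D(u)E(u) of shape mu, the blocks are given by quasideterminants: for all 1 <= a <= m+n, D_a(u) equals the quasideterminant of the a x a block array (T_{c,d}(u))_{1 <= c,d <= a} boxed at position (a,a), i.e. D_a(u) = T_{a,a}(u) - (T_{a,1}(u),...,T_{a,a-1}(u)) * ((T_{c,d}(u))_{1<=c,d<=a-1})^{-1} * (T_{1,a}(u),...,T_{a-1,a}(u))^T; and for all 1 <= a < b <= m+n, E_{a,b}(u) = D'_a(u) times the quasideterminant of the array with rows indexed 1,...,a-1,a and columns 1,...,a-1,b boxed at the (a,b) entry, while F_{b,a}(u) equals the quasideterminant of the array with rows 1,...,a-1,b and columns 1,...,a-1,a boxed at the (b,a) entry, times D'_a(u). -/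
/-!
Let `C` be the set of indices in the blocks before block `a`. Because `F` is block lower
unitriangular, `D` block diagonal and `E` block upper unitriangular, the rows and columns of `T`
through `C` factor through the corner: `T_{p,C} = F_{p,C} D_{C,C} E_{C,C}`,
`T_{C,q} = F_{C,C} D_{C,C} E_{C,q}`, and hence `T_{p,C} T_{C,C}⁻¹ T_{C,q} = F_{p,C} D_{C,C} E_{C,q}`
is exactly the contribution of the corner to `T_{p,q}`. Subtracting it, what remains of
`T_{p,q}` is `D_a E_{a,q}` when `p` runs through block `a`, and `F_{p,a} D_a` when `q` does.
All inverses exist because `T(u) ≡ 1` modulo `u⁻¹` and unitriangular matrices are invertible.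
-/

open scoped BigOperators

noncomputable section

/-- The free algebra on generators `t_{ij}^{(r+1)}` (a triple `(i,j,r)` encodes the
generator `t_{ij}^{(r+1)}`). -/
abbrev YFree (I : Type) := FreeAlgebra ℂ (I × I × ℕ)

variable {I : Type} [DecidableEq I]

/-- `tF i j r` is the element `t_{ij}^{(r)}` of the free algebra; `t_{ij}^{(0)} = δ_{ij}`. -/
def tF (i j : I) : ℕ → YFree I
  | 0 => algebraMap ℂ (YFree I) (if i = j then 1 else 0)
  | r + 1 => FreeAlgebra.ι ℂ (i, j, r)

/-- `sgn b = (-1)^b`. -/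
def sgn (b : Bool) : ℂ := if b then -1 else 1

/-- The defining relations of the super Yangian with parity function `p`
(`p i = true` means that the index `i` is odd):
`[t_{ij}^{(r)}, t_{hk}^{(s)}] = (-1)^{|i||j|+|i||h|+|j||h|} Σ_{t=0}^{min(r,s)-1}
  (t_{hj}^{(t)} t_{ik}^{(r+s-1-t)} - t_{hj}^{(r+s-1-t)} t_{ik}^{(t)})`,
where the bracket is the supercommutator. -/
inductive YRel (p : I → Bool) : YFree I → YFree I → Prop
  | rel (i j h k : I) (r s : ℕ) :
      YRel p (tF i j r * tF h k s)
        (sgn ((p i != p j) && (p h != p k)) • (tF h k s * tF i j r)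
          + sgn (((p i && p j) != (p i && p h)) != (p j && p h)) •
            ∑ t ∈ Finset.range (min r s),
              (tF h j t * tF i k (r + s - 1 - t) - tF h j (r + s - 1 - t) * tF i k t))

/-- The super Yangian associated to the index set `I` with parity function `p`. -/
abbrev Yangian (p : I → Bool) := RingQuot (YRel p)

/-- The generator `t_{ij}^{(r)}` of the super Yangian. -/
def tY (p : I → Bool) (i j : I) (r : ℕ) : Yangian p :=
  RingQuot.mkAlgHom ℂ (YRel p) (tF i j r)

/-- The generating series `t_{ij}(u) = Σ_{r ≥ 0} t_{ij}^{(r)} u^{-r}`, viewed as a formal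
power series in the variable `u^{-1}`. -/
def tSer (p : I → Bool) (i j : I) : PowerSeries (Yangian p) :=
  PowerSeries.mk fun r => tY p i j r

/- ### Composition (block) setup.
`μ = (μ_0, …, μ_{m-1} | μ_m, …, μ_{m+n-1})` is a composition of `(M|N)`: the first `m`
blocks are even and the last `n` blocks are odd.  The super Yangian `Y(gl_{M|N})` is
realized on the index set `Σ a, Fin (μ a)` (a block index together with an entry index),
with the parity of an index determined by its block. -/

variable (m n : ℕ) (μ : Fin (m + n) → ℕ)

/-- Index set attached to the composition `μ`. -/
abbrev CIdx := Σ a : Fin (m + n), Fin (μ a)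

/-- Parity of an index: even in the first `m` blocks, odd in the last `n` blocks. -/
def pC : CIdx m n μ → Bool := fun x => decide (m ≤ (x.1 : ℕ))

/-- The super Yangian `Y(gl_{M|N})` realized on the index set of the composition `μ`. -/
abbrev Yc := Yangian (pC m n μ)

abbrev Rc := PowerSeries (Yc m n μ)

/-- The matrix `T(u)`. -/
def Tc : Matrix (CIdx m n μ) (CIdx m n μ) (Rc m n μ) := fun i j => tSer _ i j

/-- Indices lying in the blocks strictly before block `a`. -/
abbrev CICorner (a : Fin (m + n)) := {x : CIdx m n μ // (x.1 : ℕ) < (a : ℕ)}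

/-- The leading corner of `T(u)` consisting of the blocks strictly before block `a`. -/
def Acorner (a : Fin (m + n)) :
    Matrix (CICorner m n μ a) (CICorner m n μ a) (Rc m n μ) :=
  fun x y => Tc m n μ x.1 y.1

/-- The quasideterminant `D_a(u)` (the `a`-th diagonal Gauss block of `T(u)`). -/
def Dmat (a : Fin (m + n)) : Matrix (Fin (μ a)) (Fin (μ a)) (Rc m n μ) :=
  fun i j =>
    Tc m n μ ⟨a, i⟩ ⟨a, j⟩ -
      ∑ x : CICorner m n μ a, ∑ y : CICorner m n μ a,
        Tc m n μ ⟨a, i⟩ x.1 * Ring.inverse (Acorner m n μ a) x y * Tc m n μ y.1 ⟨a, j⟩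

/-- `D'_a(u) = D_a(u)^{-1}`. -/
def Dmat' (a : Fin (m + n)) : Matrix (Fin (μ a)) (Fin (μ a)) (Rc m n μ) :=
  Ring.inverse (Dmat m n μ a)

/-- The boxed quasideterminant appearing in the formula for `E_{a,b}(u)`. -/
def quasE (a b : Fin (m + n)) : Matrix (Fin (μ a)) (Fin (μ b)) (Rc m n μ) :=
  fun i j =>
    Tc m n μ ⟨a, i⟩ ⟨b, j⟩ -
      ∑ x : CICorner m n μ a, ∑ y : CICorner m n μ a,
        Tc m n μ ⟨a, i⟩ x.1 * Ring.inverse (Acorner m n μ a) x y * Tc m n μ y.1 ⟨b, j⟩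

/-- The boxed quasideterminant appearing in the formula for `F_{b,a}(u)`. -/
def quasF (b a : Fin (m + n)) : Matrix (Fin (μ b)) (Fin (μ a)) (Rc m n μ) :=
  fun i j =>
    Tc m n μ ⟨b, i⟩ ⟨a, j⟩ -
      ∑ x : CICorner m n μ a, ∑ y : CICorner m n μ a,
        Tc m n μ ⟨b, i⟩ x.1 * Ring.inverse (Acorner m n μ a) x y * Tc m n μ y.1 ⟨a, j⟩

/-- The Gauss block `E_{a,b}(u) = D'_a(u) ⬝ (boxed quasideterminant)`. -/
def Emat (a b : Fin (m + n)) : Matrix (Fin (μ a)) (Fin (μ b)) (Rc m n μ) :=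
  Dmat' m n μ a * quasE m n μ a b

/-- The Gauss block `F_{b,a}(u) = (boxed quasideterminant) ⬝ D'_a(u)`. -/
def Fmat (b a : Fin (m + n)) : Matrix (Fin (μ b)) (Fin (μ a)) (Rc m n μ) :=
  quasF m n μ b a * Dmat' m n μ a

/-- `D_{a;i,j}^{(r)}`. -/
def Dc (a : Fin (m + n)) (i j : Fin (μ a)) (r : ℕ) : Yc m n μ :=
  PowerSeries.coeff r (Dmat m n μ a i j)

/-- `D'_{a;i,j}^{(r)}`. -/
def D'c (a : Fin (m + n)) (i j : Fin (μ a)) (r : ℕ) : Yc m n μ :=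
  PowerSeries.coeff r (Dmat' m n μ a i j)

/-- `E_{a,b;i,j}^{(r)}`. -/
def Eabc (a b : Fin (m + n)) (i : Fin (μ a)) (j : Fin (μ b)) (r : ℕ) : Yc m n μ :=
  PowerSeries.coeff r (Emat m n μ a b i j)

/-- `F_{b,a;i,j}^{(r)}`. -/
def Fbac (b a : Fin (m + n)) (i : Fin (μ b)) (j : Fin (μ a)) (r : ℕ) : Yc m n μ :=
  PowerSeries.coeff r (Fmat m n μ b a i j)

/-- The block `a : Fin (m+n)` built from `a : ℕ` with `a + 1 < m + n`. -/
abbrev blk (a : ℕ) (h : a + 1 < m + n) : Fin (m + n) := ⟨a, Nat.lt_of_succ_lt h⟩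
abbrev blk' (a : ℕ) (h : a + 1 < m + n) : Fin (m + n) := ⟨a + 1, h⟩

/-- `E_{a;i,j}^{(r)} = E_{a,a+1;i,j}^{(r)}` (0-indexed block `a`). -/
def Ec (a : ℕ) (h : a + 1 < m + n) (i : Fin (μ (blk m n a h))) (j : Fin (μ (blk' m n a h)))
    (r : ℕ) : Yc m n μ :=
  Eabc m n μ (blk m n a h) (blk' m n a h) i j r

/-- `F_{a;i,j}^{(r)} = F_{a+1,a;i,j}^{(r)}` (0-indexed block `a`). -/
def Fc (a : ℕ) (h : a + 1 < m + n) (i : Fin (μ (blk' m n a h))) (j : Fin (μ (blk m n a h)))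
    (r : ℕ) : Yc m n μ :=
  Fbac m n μ (blk' m n a h) (blk m n a h) i j r

namespace Matrix

variable {ι κ α γ β R : Type*} [Ring R]

section Submatrix

variable {α' γ' : Type*} [Fintype ι] [Fintype κ] (M : Matrix α ι R) (N : Matrix ι γ R)
  {p : α' → α} {q : γ' → γ} {g : κ → ι}

lemma submatrix_mul_of_apply_eq_zero_left (hg : Function.Injective g)
    (h : ∀ i z, z ∉ Set.range g → M (p i) z = 0) :
    (M * N).submatrix p q = M.submatrix p g * N.submatrix g q := by
  ext i j
  refine (Fintype.sum_of_injective g hg _ _ (fun z hz => ?_) fun _ => rfl).symm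
  simp [h i z hz]

lemma submatrix_mul_of_apply_eq_zero_right (hg : Function.Injective g)
    (h : ∀ z j, z ∉ Set.range g → N z (q j) = 0) :
    (M * N).submatrix p q = M.submatrix p g * N.submatrix g q := by
  ext i j
  refine (Fintype.sum_of_injective g hg _ _ (fun z hz => ?_) fun _ => rfl).symm
  simp [h z j hz]

end Submatrix

lemma isUnit_submatrix [Fintype ι] [DecidableEq ι] [Fintype κ] [DecidableEq κ]
    {M : Matrix ι ι R} {g : κ → ι} (hM : IsUnit M) (hg : Function.Injective g)
    (hrow : ∀ i z, z ∉ Set.range g → M (g i) z = 0)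
    (hcol : ∀ z j, z ∉ Set.range g → M z (g j) = 0) :
    IsUnit (M.submatrix g g) := by
  obtain ⟨u, rfl⟩ := hM
  refine ⟨⟨(u : Matrix ι ι R).submatrix g g, (↑u⁻¹ : Matrix ι ι R).submatrix g g, ?_, ?_⟩, rfl⟩
  · rw [← submatrix_mul_of_apply_eq_zero_left (u : Matrix ι ι R) _ hg hrow, u.mul_inv,
      submatrix_one g hg]
  · rw [← submatrix_mul_of_apply_eq_zero_right _ (u : Matrix ι ι R) hg hcol, u.inv_mul,
      submatrix_one g hg]

section Unitriangular

variable [DecidableEq ι] [LinearOrder β] {ν : ι → β}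

def BlockUnitriangular (M : Matrix ι ι R) (ν : ι → β) : Prop :=
  M.BlockTriangular ν ∧ ∀ x y, ν x = ν y → M x y = (1 : Matrix ι ι R) x y

lemma BlockUnitriangular.apply_eq_one_apply {M : Matrix ι ι R} (hM : M.BlockUnitriangular ν)
    {x y : ι} (hxy : ν y ≤ ν x) : M x y = (1 : Matrix ι ι R) x y := by
  rcases hxy.lt_or_eq with hlt | heq
  · rw [hM.1 hlt, one_apply_ne fun h => hlt.ne (by rw [h])]
  · exact hM.2 x y heq.symm

lemma BlockUnitriangular.submatrix {M : Matrix ι ι R} (hM : M.BlockUnitriangular ν)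
    [DecidableEq κ] {g : κ → ι} (hg : Function.Injective g) :
    (M.submatrix g g).BlockUnitriangular (ν ∘ g) :=
  ⟨hM.1.submatrix, fun x y hxy => by
    rw [submatrix_apply, hM.2 _ _ hxy]
    exact congrFun (congrFun (submatrix_one g hg) x) y⟩

lemma pow_apply_eq_zero_of_strictly_blockTriangular [Fintype ι] {N : Matrix ι ι R}
    (hN : ∀ x y, ν y ≤ ν x → N x y = 0) (k : ℕ) (x y : ι)
    (hk : (Finset.univ.filter fun z => ν x < ν z).card < k) : (N ^ k) x y = 0 := by
  induction k generalizing x with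
  | zero => exact absurd hk (Nat.not_lt_zero _)
  | succ k ih =>
    rw [pow_succ', mul_apply]
    refine Finset.sum_eq_zero fun z _ => ?_
    rcases le_or_gt (ν z) (ν x) with hzx | hxz
    · rw [hN x z hzx, zero_mul]
    · have hfewer : (Finset.univ.filter fun w => ν z < ν w).card <
          (Finset.univ.filter fun w => ν x < ν w).card := by
        refine Finset.card_lt_card <| (Finset.ssubset_iff_of_subset fun w hw => ?_).mpr
          ⟨z, by simpa using hxz, by simp⟩
        simp only [Finset.mem_filter, Finset.mem_univ, true_and] at hw ⊢
        exact hxz.trans hw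
      rw [ih z (hfewer.trans_le (Nat.lt_succ_iff.mp hk)), mul_zero]

lemma BlockUnitriangular.isUnit [Fintype ι] {M : Matrix ι ι R} (hM : M.BlockUnitriangular ν) :
    IsUnit M := by
  have hN : IsNilpotent (M - 1) := by
    refine ⟨Fintype.card ι + 1, ext fun x y => ?_⟩
    refine pow_apply_eq_zero_of_strictly_blockTriangular (ν := ν) (fun x y hxy => ?_) _ x y
      (Nat.lt_succ_of_le (Finset.card_le_univ _))
    rw [sub_apply, hM.apply_eq_one_apply hxy, sub_self]
  simpa using hN.isUnit_one_add

end Unitriangular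

lemma mul_mul_inverse_mul_mul_mul [Fintype κ] [DecidableEq κ] (P : Matrix α κ R)
    (Q : Matrix κ γ R) {f d e : Matrix κ κ R} (hf : IsUnit f) (hd : IsUnit d) (he : IsUnit e) :
    P * d * e * Ring.inverse (f * d * e) * (f * d * Q) = P * d * Q := by
  obtain ⟨f, rfl⟩ := hf
  obtain ⟨d, rfl⟩ := hd
  obtain ⟨e, rfl⟩ := he
  have hmid : (d * e * (f * d * e)⁻¹ * (f * d) : (Matrix κ κ R)ˣ) = d := by group
  rw [← Units.val_mul, ← Units.val_mul, Ring.inverse_unit]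
  calc _ = P * ((d * e * (f * d * e)⁻¹ * (f * d) : (Matrix κ κ R)ˣ) : Matrix κ κ R) * Q := by
        simp only [Units.val_mul, Matrix.mul_assoc]
    _ = P * (d : Matrix κ κ R) * Q := by rw [hmid]

def quasideterminant [Fintype κ] [DecidableEq κ] (A : Matrix κ κ R) (B : Matrix κ γ R)
    (C : Matrix α κ R) (D : Matrix α γ R) : Matrix α γ R :=
  D - C * Ring.inverse A * B

/-- Mathlib's `BlockTriangular` is upper triangular; composing with `toDual` makes `F` lower. -/
structure IsGaussDecomposition [DecidableEq ι] [LinearOrder β] (ν : ι → β)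
    (F D E : Matrix ι ι R) : Prop where
  lower : F.BlockUnitriangular (OrderDual.toDual ∘ ν)
  blockDiagonal : ∀ x y, ν x ≠ ν y → D x y = 0
  upper : E.BlockUnitriangular ν

namespace IsGaussDecomposition

variable {α' γ' : Type*} [Fintype ι] [DecidableEq ι] [LinearOrder β] {ν : ι → β}
  {F D E T : Matrix ι ι R} {k : β} [Fintype κ] {c : κ → ι} (hG : IsGaussDecomposition ν F D E)
include hG

lemma submatrix_mul_D (hci : Function.Injective c) (hc : ∀ z, z ∈ Set.range c ↔ ν z < k)
    (M : Matrix α ι R) (p : α' → α) :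
    (M * D).submatrix p c = M.submatrix p c * D.submatrix c c :=
  submatrix_mul_of_apply_eq_zero_right M D hci fun z j hz =>
    hG.blockDiagonal _ _ (((hc _).mp ⟨j, rfl⟩).trans_le (not_lt.mp (mt (hc z).mpr hz))).ne'

lemma submatrix_D_mul (hci : Function.Injective c) (hc : ∀ z, z ∈ Set.range c ↔ ν z < k)
    (M : Matrix ι γ R) (q : γ' → γ) :
    (D * M).submatrix c q = D.submatrix c c * M.submatrix c q :=
  submatrix_mul_of_apply_eq_zero_left D M hci fun i z hz =>
    hG.blockDiagonal _ _ (((hc _).mp ⟨i, rfl⟩).trans_le (not_lt.mp (mt (hc z).mpr hz))).ne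

variable (hT : T = F * D * E)
include hT

lemma submatrix_corner_cols (hci : Function.Injective c) (hc : ∀ z, z ∈ Set.range c ↔ ν z < k)
    (p : α → ι) :
    T.submatrix p c = F.submatrix p c * D.submatrix c c * E.submatrix c c := by
  rw [hT, submatrix_mul_of_apply_eq_zero_right (F * D) E hci fun z j hz =>
      hG.upper.1 (((hc _).mp ⟨j, rfl⟩).trans_le (not_lt.mp (mt (hc z).mpr hz))),
    hG.submatrix_mul_D hci hc]

lemma submatrix_corner_rows (hci : Function.Injective c) (hc : ∀ z, z ∈ Set.range c ↔ ν z < k)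
    (q : γ → ι) :
    T.submatrix c q = F.submatrix c c * D.submatrix c c * E.submatrix c q := by
  rw [hT, Matrix.mul_assoc, submatrix_mul_of_apply_eq_zero_left F (D * E) hci fun i z hz =>
      hG.lower.1 (show ν (c i) < ν z from
        ((hc _).mp ⟨i, rfl⟩).trans_le (not_lt.mp (mt (hc z).mpr hz))),
    hG.submatrix_D_mul hci hc, Matrix.mul_assoc]

lemma isUnit_D (hTu : IsUnit T) : IsUnit D := by
  obtain ⟨f, hf⟩ := hG.lower.isUnit
  obtain ⟨e, he⟩ := hG.upper.isUnit
  rwa [hT, ← hf, ← he, Units.isUnit_mul_units, Units.isUnit_units_mul] at hTu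

lemma isUnit_submatrix_D (hTu : IsUnit T) [DecidableEq κ]
    (hci : Function.Injective c) (hsat : ∀ i z, ν z = ν (c i) → z ∈ Set.range c) :
    IsUnit (D.submatrix c c) :=
  isUnit_submatrix (hG.isUnit_D hT hTu) hci
    (fun i z hz => hG.blockDiagonal _ _ fun h => hz (hsat i z h.symm))
    (fun z j hz => hG.blockDiagonal _ _ fun h => hz (hsat j z h))

lemma quasideterminant_corner [DecidableEq κ] (hTu : IsUnit T)
    (hci : Function.Injective c) (hc : ∀ z, z ∈ Set.range c ↔ ν z < k) (p : α → ι) (q : γ → ι) :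
    quasideterminant (T.submatrix c c) (T.submatrix c q) (T.submatrix p c) (T.submatrix p q) =
      T.submatrix p q - F.submatrix p c * D.submatrix c c * E.submatrix c q := by
  rw [quasideterminant, hG.submatrix_corner_cols hT hci hc, hG.submatrix_corner_rows hT hci hc,
    hG.submatrix_corner_rows hT hci hc, mul_mul_inverse_mul_mul_mul _ _
      (hG.lower.submatrix hci).isUnit
      (hG.isUnit_submatrix_D hT hTu hci fun j z h => (hc z).mpr (h ▸ (hc _).mp ⟨j, rfl⟩))
      (hG.upper.submatrix hci).isUnit]

lemma submatrix_eq_of_level_row (hci : Function.Injective c)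
    (hc : ∀ z, z ∈ Set.range c ↔ ν z < k) {p : α → ι} (hp : ∀ i, ν (p i) = k) (q : γ → ι) :
    T.submatrix p q =
      F.submatrix p c * D.submatrix c c * E.submatrix c q + (D * E).submatrix p q := by
  have hF : (F - 1).submatrix p c = F.submatrix p c := by
    ext i j
    rw [submatrix_apply, sub_apply, one_apply_ne fun h => ((hc _).mp ⟨j, h.symm⟩).ne (hp i),
      sub_zero, submatrix_apply]
  have hF1 : ((F - 1) * (D * E)).submatrix p q = (F - 1).submatrix p c * (D * E).submatrix c q :=
    submatrix_mul_of_apply_eq_zero_left _ _ hci fun i z hz => by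
      rw [sub_apply, hG.lower.apply_eq_one_apply (show ν (p i) ≤ ν z from
        (hp i).trans_le (not_lt.mp (mt (hc z).mpr hz))), sub_self]
  calc T.submatrix p q = ((F - 1) * (D * E)).submatrix p q + (D * E).submatrix p q := by
        ext
        simp [hT, Matrix.mul_assoc, Matrix.sub_mul]
    _ = _ := by rw [hF1, hF, hG.submatrix_D_mul hci hc, Matrix.mul_assoc]

lemma submatrix_eq_of_level_col (hci : Function.Injective c)
    (hc : ∀ z, z ∈ Set.range c ↔ ν z < k) (p : α → ι) {q : γ → ι} (hq : ∀ j, ν (q j) = k) :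
    T.submatrix p q =
      F.submatrix p c * D.submatrix c c * E.submatrix c q + (F * D).submatrix p q := by
  have hE : (E - 1).submatrix c q = E.submatrix c q := by
    ext i j
    rw [submatrix_apply, sub_apply, one_apply_ne fun h => ((hc _).mp ⟨i, h⟩).ne (hq j),
      sub_zero, submatrix_apply]
  have hE1 : (F * D * (E - 1)).submatrix p q = (F * D).submatrix p c * (E - 1).submatrix c q :=
    submatrix_mul_of_apply_eq_zero_right _ _ hci fun z j hz => by
      rw [sub_apply, hG.upper.apply_eq_one_apply
        ((hq j).trans_le (not_lt.mp (mt (hc z).mpr hz))), sub_self]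
  calc T.submatrix p q = (F * D * (E - 1)).submatrix p q + (F * D).submatrix p q := by
        ext
        simp [hT, Matrix.mul_sub]
    _ = _ := by rw [hE1, hE, hG.submatrix_mul_D hci hc]

variable [DecidableEq κ] (hTu : IsUnit T) (hci : Function.Injective c)
  (hc : ∀ z, z ∈ Set.range c ↔ ν z < k)
include hTu hci hc

lemma quasideterminant_eq_of_level_row {p : α → ι} (hp : ∀ i, ν (p i) = k) (q : γ → ι) :
    quasideterminant (T.submatrix c c) (T.submatrix c q) (T.submatrix p c) (T.submatrix p q) =
      (D * E).submatrix p q := by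
  rw [hG.quasideterminant_corner hT hTu hci hc, hG.submatrix_eq_of_level_row hT hci hc hp,
    add_sub_cancel_left]

lemma quasideterminant_eq_of_level_col (p : α → ι) {q : γ → ι} (hq : ∀ j, ν (q j) = k) :
    quasideterminant (T.submatrix c c) (T.submatrix c q) (T.submatrix p c) (T.submatrix p q) =
      (F * D).submatrix p q := by
  rw [hG.quasideterminant_corner hT hTu hci hc, hG.submatrix_eq_of_level_col hT hci hc p hq,
    add_sub_cancel_left]

variable {τ : Type*} [Fintype τ] {g : τ → ι} (hgi : Function.Injective g)
  (hg : ∀ z, z ∈ Set.range g ↔ ν z = k)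
include hgi hg

lemma quasideterminant_block_row (q : γ → ι) :
    quasideterminant (T.submatrix c c) (T.submatrix c q) (T.submatrix g c) (T.submatrix g q) =
      D.submatrix g g * E.submatrix g q := by
  rw [hG.quasideterminant_eq_of_level_row hT hTu hci hc (fun i => (hg _).mp ⟨i, rfl⟩),
    submatrix_mul_of_apply_eq_zero_left D E hgi fun i z hz => hG.blockDiagonal _ _ fun h =>
      hz ((hg z).mpr (h.symm.trans ((hg _).mp ⟨i, rfl⟩)))]

lemma quasideterminant_block_col (p : α → ι) :
    quasideterminant (T.submatrix c c) (T.submatrix c g) (T.submatrix p c) (T.submatrix p g) =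
      F.submatrix p g * D.submatrix g g := by
  rw [hG.quasideterminant_eq_of_level_col hT hTu hci hc p (fun j => (hg _).mp ⟨j, rfl⟩),
    submatrix_mul_of_apply_eq_zero_right F D hgi fun z j hz => hG.blockDiagonal _ _ fun h =>
      hz ((hg z).mpr (h.trans ((hg _).mp ⟨j, rfl⟩)))]

lemma quasideterminant_block_diag [DecidableEq τ] :
    quasideterminant (T.submatrix c c) (T.submatrix c g) (T.submatrix g c) (T.submatrix g g) =
      D.submatrix g g := by
  have hE : E.submatrix g g = 1 := by
    rw [← submatrix_one g hgi]
    ext i j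
    exact hG.upper.2 _ _ (((hg _).mp ⟨i, rfl⟩).trans ((hg _).mp ⟨j, rfl⟩).symm)
  rw [hG.quasideterminant_block_row hT hTu hci hc hgi hg, hE, Matrix.mul_one]

end IsGaussDecomposition

section PowerSeries

variable {S : Type*} [Fintype ι] [DecidableEq ι] [Ring S]

variable (ι S) in
def toPowerSeriesRingEquiv : Matrix ι ι (PowerSeries S) ≃+* PowerSeries (Matrix ι ι S) where
  toFun M := PowerSeries.mk fun k => M.map (PowerSeries.coeff k)
  invFun f := of fun i j => PowerSeries.mk fun k => PowerSeries.coeff k f i j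
  left_inv M := by ext; simp
  right_inv f := by ext; simp
  map_add' M N := by ext; simp
  map_mul' M N := by
    ext k i j
    simp only [PowerSeries.coeff_mk, map_apply, PowerSeries.coeff_mul, mul_apply, map_sum,
      sum_apply]
    exact Finset.sum_comm

lemma isUnit_of_isUnit_map_constantCoeff {M : Matrix ι ι (PowerSeries S)}
    (h : IsUnit (M.map PowerSeries.constantCoeff)) : IsUnit M := by
  have hM : IsUnit (toPowerSeriesRingEquiv ι S M) := by
    rw [PowerSeries.isUnit_iff_constantCoeff]
    convert h using 1
    ext i j
    simp [toPowerSeriesRingEquiv, PowerSeries.constantCoeff_mk]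
  simpa using hM.map (toPowerSeriesRingEquiv ι S).symm

end PowerSeries

end Matrix

open Matrix

lemma Tc_map_constantCoeff : (Tc m n μ).map PowerSeries.constantCoeff = 1 := by
  ext x y
  change PowerSeries.constantCoeff (PowerSeries.mk fun r => tY (pC m n μ) x y r) = _
  rw [PowerSeries.constantCoeff_mk, tY, tF, AlgHom.commutes, one_apply]
  split_ifs <;> simp

lemma isUnit_Tc : IsUnit (Tc m n μ) :=
  isUnit_of_isUnit_map_constantCoeff (by rw [Tc_map_constantCoeff]; exact isUnit_one)

abbrev blockEmb (a : Fin (m + n)) : Fin (μ a) → CIdx m n μ :=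
  Sigma.mk (β := fun a => Fin (μ a)) a

abbrev cornerEmb (a : Fin (m + n)) : CICorner m n μ a → CIdx m n μ := Subtype.val

lemma quasE_eq_quasideterminant (a b : Fin (m + n)) :
    quasE m n μ a b = quasideterminant
      ((Tc m n μ).submatrix (cornerEmb m n μ a) (cornerEmb m n μ a))
      ((Tc m n μ).submatrix (cornerEmb m n μ a) (blockEmb m n μ b))
      ((Tc m n μ).submatrix (blockEmb m n μ a) (cornerEmb m n μ a))
      ((Tc m n μ).submatrix (blockEmb m n μ a) (blockEmb m n μ b)) := by
  ext i j : 1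
  simp only [quasE, quasideterminant, Matrix.sub_apply, mul_apply, submatrix_apply,
    Finset.sum_mul]
  rw [Finset.sum_comm]
  rfl

lemma quasF_eq_quasideterminant (b a : Fin (m + n)) :
    quasF m n μ b a = quasideterminant
      ((Tc m n μ).submatrix (cornerEmb m n μ a) (cornerEmb m n μ a))
      ((Tc m n μ).submatrix (cornerEmb m n μ a) (blockEmb m n μ a))
      ((Tc m n μ).submatrix (blockEmb m n μ b) (cornerEmb m n μ a))
      ((Tc m n μ).submatrix (blockEmb m n μ b) (blockEmb m n μ a)) := by
  ext i j : 1
  simp only [quasF, quasideterminant, Matrix.sub_apply, mul_apply, submatrix_apply,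
    Finset.sum_mul]
  rw [Finset.sum_comm]
  rfl

lemma mem_range_cornerEmb_iff (a : Fin (m + n)) (z : CIdx m n μ) :
    z ∈ Set.range (cornerEmb m n μ a) ↔ (z.1 : ℕ) < a := by
  simp

lemma mem_range_blockEmb_iff (a : Fin (m + n)) (z : CIdx m n μ) :
    z ∈ Set.range (blockEmb m n μ a) ↔ (z.1 : ℕ) = a := by
  simp [Set.range_sigmaMk, Fin.val_inj]

section GaussBlocks

variable {m n μ} {F D E : Matrix (CIdx m n μ) (CIdx m n μ) (Rc m n μ)}
  (hG : IsGaussDecomposition (fun x : CIdx m n μ => (x.1 : ℕ)) F D E) (hT : Tc m n μ = F * D * E)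
include hG hT

lemma Dmat_eq_submatrix (a : Fin (m + n)) :
    Dmat m n μ a = D.submatrix (blockEmb m n μ a) (blockEmb m n μ a) :=
  (quasE_eq_quasideterminant m n μ a a).trans <| hG.quasideterminant_block_diag hT
    (isUnit_Tc m n μ) Subtype.val_injective (mem_range_cornerEmb_iff m n μ a) sigma_mk_injective
    (mem_range_blockEmb_iff m n μ a)

lemma isUnit_Dmat (a : Fin (m + n)) : IsUnit (Dmat m n μ a) := by
  rw [Dmat_eq_submatrix hG hT]
  exact hG.isUnit_submatrix_D hT (isUnit_Tc m n μ) sigma_mk_injective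
    fun i z h => (mem_range_blockEmb_iff m n μ a z).mpr h

lemma Emat_eq_submatrix (a b : Fin (m + n)) :
    Emat m n μ a b = E.submatrix (blockEmb m n μ a) (blockEmb m n μ b) := by
  rw [Emat, Dmat', quasE_eq_quasideterminant,
    hG.quasideterminant_block_row hT (isUnit_Tc m n μ) Subtype.val_injective
      (mem_range_cornerEmb_iff m n μ a) sigma_mk_injective (mem_range_blockEmb_iff m n μ a),
    ← Dmat_eq_submatrix hG hT, ← Matrix.mul_assoc,
    Ring.inverse_mul_cancel _ (isUnit_Dmat hG hT a), Matrix.one_mul]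

lemma Fmat_eq_submatrix (b a : Fin (m + n)) :
    Fmat m n μ b a = F.submatrix (blockEmb m n μ b) (blockEmb m n μ a) := by
  rw [Fmat, Dmat', quasF_eq_quasideterminant,
    hG.quasideterminant_block_col hT (isUnit_Tc m n μ) Subtype.val_injective
      (mem_range_cornerEmb_iff m n μ a) sigma_mk_injective (mem_range_blockEmb_iff m n μ a),
    ← Dmat_eq_submatrix hG hT, Matrix.mul_assoc,
    Ring.mul_inverse_cancel _ (isUnit_Dmat hG hT a), Matrix.mul_one]

end GaussBlocks

/-- **Proposition 3.1 (Gauss decomposition via quasideterminants).**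
Suppose `T(u) = F(u) D(u) E(u)` where `D(u)` is block diagonal, `E(u)` is block upper
unitriangular and `F(u)` is block lower unitriangular (blocks of shape `μ`).  Then the
blocks of `D(u)`, `E(u)`, `F(u)` are given by the quasideterminant formulas:
`D_a(u)` is the quasideterminant of the leading `a × a` block array boxed at `(a,a)`,
`E_{a,b}(u) = D'_a(u) ⬝ (quasideterminant boxed at the `(a,b)` entry)`, and
`F_{b,a}(u) = (quasideterminant boxed at the `(b,a)` entry) ⬝ D'_a(u)`. -/
theorem gauss_decomposition_quasideterminants
    (F D E : Matrix (CIdx m n μ) (CIdx m n μ) (Rc m n μ))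
    (hD : ∀ x y : CIdx m n μ, x.1 ≠ y.1 → D x y = 0)
    (hEupper : ∀ x y : CIdx m n μ, (y.1 : ℕ) < (x.1 : ℕ) → E x y = 0)
    (hEdiag : ∀ x y : CIdx m n μ, x.1 = y.1 → E x y = if x = y then 1 else 0)
    (hFlower : ∀ x y : CIdx m n μ, (x.1 : ℕ) < (y.1 : ℕ) → F x y = 0)
    (hFdiag : ∀ x y : CIdx m n μ, x.1 = y.1 → F x y = if x = y then 1 else 0)
    (hT : Tc m n μ = F * D * E) :
    (∀ (a : Fin (m + n)) (i j : Fin (μ a)), D ⟨a, i⟩ ⟨a, j⟩ = Dmat m n μ a i j) ∧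
    (∀ (a b : Fin (m + n)), a < b → ∀ (i : Fin (μ a)) (j : Fin (μ b)),
      E ⟨a, i⟩ ⟨b, j⟩ = Emat m n μ a b i j) ∧
    (∀ (a b : Fin (m + n)), a < b → ∀ (i : Fin (μ b)) (j : Fin (μ a)),
      F ⟨b, i⟩ ⟨a, j⟩ = Fmat m n μ b a i j) := by
  have hG : IsGaussDecomposition (fun x : CIdx m n μ => (x.1 : ℕ)) F D E :=
    { lower := ⟨hFlower, fun x y h => (hFdiag x y (Fin.ext h)).trans (one_apply).symm⟩
      blockDiagonal := fun x y h => hD x y (mt (congrArg Fin.val) h)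
      upper := ⟨hEupper, fun x y h => (hEdiag x y (Fin.ext h)).trans (one_apply).symm⟩ }
  exact ⟨fun a i j => (congrFun₂ (Dmat_eq_submatrix hG hT a) i j).symm,
    fun a b _ i j => (congrFun₂ (Emat_eq_submatrix hG hT a b) i j).symm,
    fun a b _ i j => (congrFun₂ (Fmat_eq_submatrix hG hT b a) i j).symm⟩

end
end

section
/- (1) For every k >= 0 and all 1 <= i, j <= M+N, psi_k(t_{ij}(u)) equals the quasideterminant t_{k+i,k+j}(u) - (t_{k+i,1}(u),...,t_{k+i,k}(u)) * ((t_{ab}(u))_{1<=a,b<=k})^{-1} * (t_{1,k+j}(u),...,t_{k,k+j}(u))^T, an identity in Y(gl_{k+M|N})((u^{-1})). (2) For all 1 <= i, j <= M+N, zeta_{M|N}(t_{ij}(u)) = t'_{M+N+1-i, M+N+1-j}(u), where t'_{ij}(u) are the entries of T(u)^{-1} in Y(gl_{N|M}). -/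
open scoped BigOperators

noncomputable section

variable {I : Type} [DecidableEq I]

/- ### The standard realization of `Y(gl_{M|N})` and the maps `ρ`, `ω`. -/

/-- The standard parity on `Fin (M+N)` (0-indexed): the first `M` indices are even and
the last `N` indices are odd. -/
def stdP (M N : ℕ) : Fin (M + N) → Bool := fun i => decide (M ≤ (i : ℕ))

/-- The super Yangian `Y(gl_{M|N})`. -/
abbrev Ystd (M N : ℕ) := Yangian (stdP M N)

/-- The matrix `T(u)` of `Y(gl_{M|N})`. -/
def Tstd (M N : ℕ) : Matrix (Fin (M + N)) (Fin (M + N)) (PowerSeries (Ystd M N)) :=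
  fun i j => tSer _ i j

/-- The matrix `T(-u)`: the coefficient of `u^{-r}` in its `(i,j)` entry is
`(-1)^r t_{ij}^{(r)}`. -/
def TstdNeg (M N : ℕ) : Matrix (Fin (M + N)) (Fin (M + N)) (PowerSeries (Ystd M N)) :=
  fun i j => PowerSeries.mk fun r => ((-1 : ℂ) ^ r) • tY (stdP M N) i j r

/-- `IsOmega f` says that `f(T(u)) = (T(-u))^{-1}`, i.e. the matrix obtained by applying
`f` entrywise to `T(u)` is a two-sided inverse of `T(-u)`. -/
def IsOmega (M N : ℕ) (f : Ystd M N →+* Ystd M N) : Prop :=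
  (Matrix.of fun i j => PowerSeries.map f (Tstd M N i j)) * TstdNeg M N = 1 ∧
    TstdNeg M N * (Matrix.of fun i j => PowerSeries.map f (Tstd M N i j)) = 1

/-- The order-reversing bijection `i ↦ M+N+1-i` (0-indexed: `i ↦ M+N-1-i`). -/
def revIdx (M N : ℕ) : Fin (M + N) → Fin (N + M) :=
  fun i => ⟨M + N - 1 - (i : ℕ), by have := i.isLt; omega⟩

/-- `IsRho g` says that `g(t_{ij}(u)) = t_{M+N+1-i,M+N+1-j}(-u)`, i.e.
`g(t_{ij}^{(r)}) = (-1)^r t_{M+N+1-i,M+N+1-j}^{(r)}`. -/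
def IsRho (M N : ℕ) (g : Ystd M N → Ystd N M) : Prop :=
  ∀ (i j : Fin (M + N)) (r : ℕ),
    g (tY (stdP M N) i j r) = ((-1 : ℂ) ^ r) • tY (stdP N M) (revIdx M N i) (revIdx M N j) r

/-- The shift embedding `Fin (M+N) → Fin (k+M+N)`, `i ↦ k + i`. -/
def shiftIdx (M N k : ℕ) : Fin (M + N) → Fin (k + M + N) :=
  fun i => ⟨k + (i : ℕ), by have := i.isLt; omega⟩

/-- `IsPhi φ` says that `φ(t_{ij}^{(r)}) = t_{k+i,k+j}^{(r)}` (the inclusion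
`Y(gl_{M|N}) → Y(gl_{k+M|N})`). -/
def IsPhi (M N k : ℕ) (φ : Ystd M N → Ystd (k + M) N) : Prop :=
  ∀ (i j : Fin (M + N)) (r : ℕ),
    φ (tY (stdP M N) i j r) = tY (stdP (k + M) N) (shiftIdx M N k i) (shiftIdx M N k j) r

/-- The embedding `Fin k → Fin (k+M+N)` onto the first `k` indices. -/
def embk (M N k : ℕ) : Fin k → Fin (k + M + N) :=
  fun x => ⟨(x : ℕ), by have := x.isLt; omega⟩

/-- The north-western `k × k` corner of `T(u)` in `Y(gl_{k+M|N})`. -/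
def cornerK (M N k : ℕ) : Matrix (Fin k) (Fin k) (PowerSeries (Ystd (k + M) N)) :=
  fun x y => tSer _ (embk M N k x) (embk M N k y)

/-!
Both parts are statements about inverse matrices over the noncommutative ring `Y⟦u⁻¹⟧`.
Substituting `u ↦ -u` in `ω(T(u)) T(-u) = 1` shows that `S := ω(T(-u))` is a left inverse of
`T(u)`.

(1) Applying `ω ∘ φ` to the relation `ω(T(u)) T(-u) = 1` of `Y(gl_{M|N})` shows that
`ψ_k(T(u))` is a left inverse of the south-eastern block of `S` in `Y(gl_{k+M|N})`. Since
`S T(u) = 1`, that block is in turn a left inverse of the Schur complement of the north-western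
`k × k` corner of `T(u)` (invertible, its constant term being `1`), so `ψ_k(T(u))` is this Schur
complement, i.e. the quasideterminant.

(2) `ρ(T(-u))` is `T(u)` of `Y(gl_{N|M})` with rows and columns reversed, so applying `ρ` to
`ω(T(u)) T(-u) = 1 = T(-u) ω(T(u))` exhibits `ζ(T(u))` as the reversed inverse of `T(u)`.
-/

namespace PowerSeries

variable {K A : Type*} [CommSemiring K] [Semiring A] [Algebra K A]

/-- The substitution `X ↦ c • X`; unlike `PowerSeries.rescale`, the coefficients may lie in a
noncommutative `K`-algebra. -/
def rescaleScalar (c : K) : A⟦X⟧ →+* A⟦X⟧ where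
  toFun f := mk fun n => c ^ n • coeff n f
  map_one' := by
    ext n
    rcases n with _ | n <;> simp [coeff_one]
  map_mul' f g := by
    ext n
    simp only [coeff_mk, coeff_mul, Finset.smul_sum]
    refine Finset.sum_congr rfl fun p hp => ?_
    rw [← Finset.HasAntidiagonal.mem_antidiagonal.mp hp, pow_add, smul_mul_smul_comm]
  map_zero' := by ext; simp
  map_add' f g := by ext; simp

@[simp]
theorem coeff_rescaleScalar (c : K) (f : A⟦X⟧) (n : ℕ) :
    coeff n (rescaleScalar c f) = c ^ n • coeff n f := by
  simp [rescaleScalar]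

theorem rescaleScalar_rescaleScalar (c d : K) (f : A⟦X⟧) :
    rescaleScalar c (rescaleScalar d f) = rescaleScalar (c * d) f := by
  ext n
  simp [mul_pow, mul_smul]

theorem rescaleScalar_one (f : A⟦X⟧) : rescaleScalar (1 : K) f = f := by
  ext n
  simp

end PowerSeries

namespace Matrix

open PowerSeries

variable {m n α : Type*} [Fintype m] [Fintype n] [DecidableEq m] [DecidableEq n]

def ofPowerSeriesHom [Semiring α] :
    (Matrix n n α)⟦X⟧ →+* Matrix n n α⟦X⟧ where
  toFun f := of fun i j => mk fun r => coeff r f i j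
  map_one' := by
    ext i j r
    by_cases h : i = j <;> rcases r with _ | r <;> simp [h, coeff_one, one_apply]
  map_mul' f g := by
    ext i j r
    simp only [of_apply, coeff_mk, coeff_mul, mul_apply, sum_apply, map_sum]
    exact Finset.sum_comm
  map_zero' := by ext; simp
  map_add' f g := by ext; simp

theorem isUnit_of_isUnit_map_constantCoeff_s6 [Ring α] {M : Matrix n n α⟦X⟧}
    (h : IsUnit (M.map constantCoeff)) : IsUnit M := by
  have hM : ofPowerSeriesHom (mk fun r => M.map (coeff r)) = M := by
    ext i j r
    simp [ofPowerSeriesHom]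
  rw [← hM]
  refine IsUnit.map _ (isUnit_iff_constantCoeff.mpr ?_)
  simpa [constantCoeff_mk, coeff_zero_eq_constantCoeff] using h

variable [Ring α]

theorem toBlocks₂₂_mul_schurComplement_eq_one (X S : Matrix (m ⊕ n) (m ⊕ n) α)
    (hSX : S * X = 1) (hA : IsUnit X.toBlocks₁₁) :
    S.toBlocks₂₂ * (X.toBlocks₂₂ - X.toBlocks₂₁ * Ring.inverse X.toBlocks₁₁ * X.toBlocks₁₂) =
      1 := by
  set A := X.toBlocks₁₁
  set C := X.toBlocks₂₁
  rw [← fromBlocks_toBlocks X, ← fromBlocks_toBlocks S, fromBlocks_multiply,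
    ← fromBlocks_one] at hSX
  have h₂₁ := congrArg toBlocks₂₁ hSX
  have h₂₂ := congrArg toBlocks₂₂ hSX
  simp only [toBlocks_fromBlocks₂₁, toBlocks_fromBlocks₂₂] at h₂₁ h₂₂
  have hS₂₁ : S.toBlocks₂₁ = -(S.toBlocks₂₂ * C * Ring.inverse A) := by
    rw [eq_neg_iff_add_eq_zero]
    calc S.toBlocks₂₁ + S.toBlocks₂₂ * C * Ring.inverse A
        = (S.toBlocks₂₁ * A + S.toBlocks₂₂ * C) * Ring.inverse A := by
          rw [Matrix.add_mul, Matrix.mul_assoc _ A, Ring.mul_inverse_cancel _ hA, Matrix.mul_one]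
      _ = 0 := by rw [h₂₁, Matrix.zero_mul]
  rw [← h₂₂, hS₂₁]
  simp only [Matrix.mul_sub, Matrix.neg_mul, Matrix.mul_assoc]
  abel

theorem ringInverse_submatrix_equiv (B : Matrix n n α) (e : m ≃ n) :
    Ring.inverse (B.submatrix e e) = (Ring.inverse B).submatrix e e := by
  by_cases hB : IsUnit B
  · let u : (Matrix m m α)ˣ :=
      ⟨B.submatrix e e, (Ring.inverse B).submatrix e e,
        by rw [submatrix_mul_equiv, Ring.mul_inverse_cancel _ hB, submatrix_one_equiv],
        by rw [submatrix_mul_equiv, Ring.inverse_mul_cancel _ hB, submatrix_one_equiv]⟩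
    exact Ring.inverse_unit u
  · have hBe : ¬IsUnit (B.submatrix e e) := fun h => hB <| by
      simpa using h.map (reindexAlgEquiv ℕ α e)
    simp [Ring.inverse_non_unit _ hB, Ring.inverse_non_unit _ hBe]

end Matrix

section Yangian

open PowerSeries Matrix

theorem constantCoeff_tSer (p : I → Bool) (i j : I) :
    constantCoeff (tSer p i j) = if i = j then 1 else 0 := by
  rw [tSer, constantCoeff_mk, tY, tF, AlgHom.commutes]
  split_ifs <;> simp

variable (M N k : ℕ)

theorem Tstd_map_constantCoeff : (Tstd M N).map constantCoeff = 1 := by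
  ext i j
  simp [Tstd, constantCoeff_tSer, one_apply]

theorem isUnit_cornerK : IsUnit (cornerK M N k) := by
  refine isUnit_of_isUnit_map_constantCoeff_s6 ?_
  have hinj : Function.Injective (embk M N k) := fun _ _ h => Fin.ext (Fin.mk.inj h)
  have : (cornerK M N k).map constantCoeff = 1 := by
    rw [show cornerK M N k = (Tstd (k + M) N).submatrix (embk M N k) (embk M N k) from rfl,
      ← submatrix_map, Tstd_map_constantCoeff, submatrix_one _ hinj]
  rw [this]
  exact isUnit_one

theorem TstdNeg_eq_rescaleScalar :
    TstdNeg M N = (rescaleScalar (-1 : ℂ)).mapMatrix (Tstd M N) := by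
  ext i j n
  simp [TstdNeg, Tstd, tSer]

theorem rescaleScalar_TstdNeg : (rescaleScalar (-1 : ℂ)).mapMatrix (TstdNeg M N) = Tstd M N := by
  ext i j : 2
  simp [TstdNeg_eq_rescaleScalar, rescaleScalar_rescaleScalar, rescaleScalar_one]

/-- Definitionally `embk` on `Fin k` and `shiftIdx` on `Fin (M + N)`, so that the blocks of
`(Tstd (k + M) N).submatrix e e` are the submatrices occurring in the quasideterminant. -/
def sumEquiv : Fin k ⊕ Fin (M + N) ≃ Fin (k + M + N) :=
  finSumFinEquiv.trans (finCongr (Nat.add_assoc k M N).symm)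

def revEquiv : Fin (M + N) ≃ Fin (N + M) where
  toFun := revIdx M N
  invFun := revIdx N M
  left_inv i := Fin.ext <| by simp only [revIdx]; omega
  right_inv i := Fin.ext <| by simp only [revIdx]; omega

variable {M N k}

theorem IsOmega.map_TstdNeg_mul_Tstd {ω : Ystd M N →ₐ[ℂ] Ystd M N}
    (hω : IsOmega M N ω.toRingHom) :
    (map ω.toRingHom).mapMatrix (TstdNeg M N) * Tstd M N = 1 := by
  have hneg : (rescaleScalar (-1 : ℂ)).mapMatrix (of fun i j => map ω.toRingHom (Tstd M N i j)) =
      (map ω.toRingHom).mapMatrix (TstdNeg M N) := by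
    ext i j : 2
    simp [TstdNeg_eq_rescaleScalar]
  have h := congrArg (rescaleScalar (-1 : ℂ)).mapMatrix hω.1
  rwa [map_mul, map_one, hneg, rescaleScalar_TstdNeg] at h

theorem IsPhi.map_TstdNeg {φ : Ystd M N →ₐ[ℂ] Ystd (k + M) N} (hφ : IsPhi M N k φ) :
    (map φ.toRingHom).mapMatrix (TstdNeg M N) =
      (TstdNeg (k + M) N).submatrix (shiftIdx M N k) (shiftIdx M N k) := by
  ext i j n
  simpa [TstdNeg] using hφ i j n

theorem IsRho.map_TstdNeg {ρ : Ystd M N →ₐ[ℂ] Ystd N M} (hρ : IsRho M N ρ) :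
    (map ρ.toRingHom).mapMatrix (TstdNeg M N) =
      (Tstd N M).submatrix (revIdx M N) (revIdx M N) := by
  ext i j n
  simp only [TstdNeg, Tstd, tSer, RingHom.mapMatrix_apply, map_apply, submatrix_apply, coeff_map,
    coeff_mk]
  rw [AlgHom.toRingHom_eq_coe, RingHom.coe_coe, map_smul, hρ, smul_smul, ← mul_pow]
  simp

theorem map_psi_Tstd_eq_quasideterminant (φ : Ystd M N →ₐ[ℂ] Ystd (k + M) N)
    (hφ : IsPhi M N k φ)
    (ω₁ : Ystd M N →ₐ[ℂ] Ystd M N) (hω₁ : IsOmega M N ω₁.toRingHom)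
    (ω₂ : Ystd (k + M) N →ₐ[ℂ] Ystd (k + M) N) (hω₂ : IsOmega (k + M) N ω₂.toRingHom) :
    (map (ω₂.comp (φ.comp ω₁)).toRingHom).mapMatrix (Tstd M N) =
      (Tstd (k + M) N).submatrix (shiftIdx M N k) (shiftIdx M N k) -
        (Tstd (k + M) N).submatrix (shiftIdx M N k) (embk M N k) * Ring.inverse (cornerK M N k) *
          (Tstd (k + M) N).submatrix (embk M N k) (shiftIdx M N k) := by
  set S := (map ω₂.toRingHom).mapMatrix (TstdNeg (k + M) N)
  set X := (Tstd (k + M) N).submatrix (sumEquiv M N k) (sumEquiv M N k)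
  have hΨS : (map (ω₂.comp (φ.comp ω₁)).toRingHom).mapMatrix (Tstd M N) *
      S.submatrix (shiftIdx M N k) (shiftIdx M N k) = 1 := by
    have hcomp : (map ω₂.toRingHom).mapMatrix
        ((map φ.toRingHom).mapMatrix (of fun i j => map ω₁.toRingHom (Tstd M N i j))) =
          (map (ω₂.comp (φ.comp ω₁)).toRingHom).mapMatrix (Tstd M N) := by
      ext i j n
      simp
    have h := congrArg (fun A => (map ω₂.toRingHom).mapMatrix ((map φ.toRingHom).mapMatrix A))
      hω₁.1
    simp only [map_mul, map_one, hφ.map_TstdNeg, hcomp] at h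
    exact h
  have hSX : S.submatrix (sumEquiv M N k) (sumEquiv M N k) * X = 1 := by
    rw [submatrix_mul_equiv, hω₂.map_TstdNeg_mul_Tstd, submatrix_one_equiv]
  have hschur := toBlocks₂₂_mul_schurComplement_eq_one X _ hSX (isUnit_cornerK M N k)
  exact left_inv_eq_right_inv hΨS hschur

theorem map_zeta_Tstd_eq_ringInverse (ρ : Ystd M N →ₐ[ℂ] Ystd N M) (hρ : IsRho M N ρ)
    (ω : Ystd M N →ₐ[ℂ] Ystd M N) (hω : IsOmega M N ω.toRingHom) :
    (map (ρ.comp ω).toRingHom).mapMatrix (Tstd M N) =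
      (Ring.inverse (Tstd N M)).submatrix (revIdx M N) (revIdx M N) := by
  have hcomp : (map ρ.toRingHom).mapMatrix (of fun i j => map ω.toRingHom (Tstd M N i j)) =
      (map (ρ.comp ω).toRingHom).mapMatrix (Tstd M N) := by
    ext i j n
    simp
  have h₁ := congrArg (map ρ.toRingHom).mapMatrix hω.1
  have h₂ := congrArg (map ρ.toRingHom).mapMatrix hω.2
  rw [map_mul, map_one, hcomp, hρ.map_TstdNeg] at h₁ h₂
  change _ = (Ring.inverse (Tstd N M)).submatrix (revEquiv M N) (revEquiv M N)
  rw [← ringInverse_submatrix_equiv]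
  exact (Ring.inverse_unit ⟨_, _, h₂, h₁⟩).symm

end Yangian

/-- **Lemma 4.1.**
(1) `ψ_k(t_{ij}(u))` equals the quasideterminant
`t_{k+i,k+j}(u) - (t_{k+i,1}(u),…,t_{k+i,k}(u)) ((t_{ab}(u))_{a,b ≤ k})^{-1}
(t_{1,k+j}(u),…,t_{k,k+j}(u))ᵀ` in `Y(gl_{k+M|N})[[u^{-1}]]`.
(2) `ζ_{M|N}(t_{ij}(u)) = t'_{M+N+1-i,M+N+1-j}(u)`, where `t'_{ij}(u)` are the entries of
`T(u)^{-1}` in `Y(gl_{N|M})`. -/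
theorem psi_quasideterminant_and_zeta_inverse (M N k : ℕ) :
    (∀ (φ : Ystd M N →ₐ[ℂ] Ystd (k + M) N), IsPhi M N k ⇑φ →
      ∀ (ω₁ : Ystd M N ≃ₐ[ℂ] Ystd M N), IsOmega M N ω₁.toAlgHom.toRingHom →
      ∀ (ω₂ : Ystd (k + M) N ≃ₐ[ℂ] Ystd (k + M) N),
        IsOmega (k + M) N ω₂.toAlgHom.toRingHom →
      ∀ (i j : Fin (M + N)),
        PowerSeries.map (ω₂.toAlgHom.comp (φ.comp ω₁.toAlgHom)).toRingHom
            (tSer (stdP M N) i j) =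
          Tstd (k + M) N (shiftIdx M N k i) (shiftIdx M N k j) -
            ∑ x : Fin k, ∑ y : Fin k,
              Tstd (k + M) N (shiftIdx M N k i) (embk M N k x) *
                Ring.inverse (cornerK M N k) x y *
                Tstd (k + M) N (embk M N k y) (shiftIdx M N k j)) ∧
    (∀ (ρ : Ystd M N ≃ₐ[ℂ] Ystd N M), IsRho M N ⇑ρ →
      ∀ (ω : Ystd M N ≃ₐ[ℂ] Ystd M N), IsOmega M N ω.toAlgHom.toRingHom →
      ∀ (i j : Fin (M + N)),
        PowerSeries.map (ρ.toAlgHom.comp ω.toAlgHom).toRingHom (tSer (stdP M N) i j) =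
          Ring.inverse (Tstd N M) (revIdx M N i) (revIdx M N j)) := by
  constructor
  · intro φ hφ ω₁ hω₁ ω₂ hω₂ i j
    have h := congrFun (congrFun (map_psi_Tstd_eq_quasideterminant φ hφ _ hω₁ _ hω₂) i) j
    simp only [Matrix.sub_apply, Matrix.mul_apply, Finset.sum_mul] at h
    rw [Finset.sum_comm] at h
    exact h
  · intro ρ hρ ω hω i j
    exact congrFun (congrFun (map_zeta_Tstd_eq_ringInverse ρ.toAlgHom hρ _ hω) i) j

end
end

section
/- Inside Y(gl_{k+M|N}), the subalgebra Y(gl_k) generated by the elements {t_{ij}^{(r)} : 1 <= i, j <= k, r >= 1} and the subalgebra psi_k(Y(gl_{M|N})) supercommute with each other; that is, the supercommutator of any element of the first subalgebra with any element of the second is zero. -/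
open scoped BigOperators

noncomputable section

variable {I : Type} [DecidableEq I]

/-!
For even `i, j`, the defining relation says that commuting `t_{ij}^{(r)}` with `T(-u)` gives
`u⁻¹ (H(u) e_iᵀ T(-u) - T(-u) e_j K(u)ᵀ)` for two columns of series `H, K`. Hence
`[t_{ij}^{(r)}, T(-u)⁻¹] = -T(-u)⁻¹ [t_{ij}^{(r)}, T(-u)] T(-u)⁻¹
  = -u⁻¹ (T(-u)⁻¹ H e_iᵀ - e_j Kᵀ T(-u)⁻¹)`,
whose `(a, b)` entry vanishes for `a ≠ j`, `b ≠ i`. As `ω(T(u)) = T(-u)⁻¹`, every `t_{ij}^{(r)}`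
with `i, j ≤ k` commutes with every `ω(t_{ab}^{(s)})` with `a, b > k`, and these generate the
image of `ψ_k`: `φ` maps `t_{ab}^{(s)}` to `t_{k+a,k+b}^{(s)}` and the `t_{ab}^{(s)}` generate
`Y(gl_{M|N})`.
-/

open PowerSeries Finset

theorem sum_antidiagonal_shift_sub {M : Type*} [AddCommGroup M] (g : ℕ → ℕ → M) (r n : ℕ) :
    ∑ q ∈ antidiagonal n, (g (q.1 + r) q.2 - g q.1 (q.2 + r)) =
      ∑ u ∈ range (min r (n + 1)), (g (r + n - u) u - g u (r + n - u)) := by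
  set G : ℕ → M := fun u => g u (r + n - u)
  have hswap : ∑ q ∈ antidiagonal n, g (q.1 + r) q.2 = ∑ u ∈ range (n + 1), G (r + n - u) := by
    rw [← Nat.sum_antidiagonal_swap, Nat.sum_antidiagonal_eq_sum_range_succ_mk]
    refine sum_congr rfl fun u hu => ?_
    simp only [Prod.swap_prod_mk, G]
    have := mem_range.1 hu
    congr 1 <;> omega
  have hdiag : ∑ q ∈ antidiagonal n, g q.1 (q.2 + r) = ∑ u ∈ range (n + 1), G u := by
    rw [Nat.sum_antidiagonal_eq_sum_range_succ_mk]
    refine sum_congr rfl fun u hu => ?_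
    simp only [G]
    have := mem_range.1 hu
    congr 1; omega
  have hG : ∀ u ∈ range (min r (n + 1)),
      g (r + n - u) u - g u (r + n - u) = G (r + n - u) - G u := by
    intro u hu
    have := mem_range.1 hu
    simp only [G]; congr 2; omega
  rw [sum_sub_distrib, hswap, hdiag, ← sum_sub_distrib, sum_congr rfl hG]
  rcases le_total r (n + 1) with hr | hr
  -- the terms with `r ≤ u ≤ n` cancel in pairs under `u ↦ r + n - u`
  · rw [min_eq_left hr, ← sum_range_add_sum_Ico _ hr, add_eq_left, sum_sub_distrib,
      sum_Ico_reflect G r (n := r + n) (by omega), sub_eq_zero]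
    congr 2 <;> omega
  · rw [min_eq_right hr]

section NegSeries

variable {A : Type*} [Ring A] [Algebra ℂ A]

/-- `x(-u)` for the series `x(u) = ∑ xₘ u⁻ᵐ`, as a power series in `u⁻¹`. -/
def negSer (x : ℕ → A) : PowerSeries A :=
  mk fun m => ((-1 : ℂ) ^ m) • x m

theorem coeff_negSer_mul_negSer (x y : ℕ → A) (n : ℕ) :
    coeff n (negSer x * negSer y) = ((-1 : ℂ) ^ n) • ∑ q ∈ antidiagonal n, x q.1 * y q.2 := by
  rw [negSer, negSer, coeff_mul, smul_sum]
  refine sum_congr rfl fun q hq => ?_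
  rw [coeff_mk, coeff_mk, smul_mul_smul_comm, ← pow_add, mem_antidiagonal.1 hq]

theorem C_mul_negSer_sub_negSer_mul_C {t : A} {a b c : ℕ → A} {r : ℕ}
    (h : ∀ s, t * a s - a s * t =
      ∑ u ∈ range (min r s), (b u * c (r + s - 1 - u) - b (r + s - 1 - u) * c u)) :
    C t * negSer a - negSer a * C t =
      X * (negSer (fun m => b (m + r)) * negSer c - negSer b * negSer fun m => c (m + r)) := by
  ext (_ | n)
  · simp [negSer, h]
  · rw [map_sub, coeff_C_mul, coeff_mul_C, coeff_succ_X_mul, map_sub, coeff_negSer_mul_negSer,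
      coeff_negSer_mul_negSer, negSer, coeff_mk, mul_smul_comm, smul_mul_assoc, ← smul_sub,
      ← smul_sub, h, ← sum_sub_distrib, sum_antidiagonal_shift_sub (fun u v => b u * c v),
      pow_succ, mul_neg_one, neg_smul, ← smul_neg, ← sum_neg_distrib]
    refine congrArg _ (sum_congr rfl fun u _ => ?_)
    rw [neg_sub, Nat.add_succ_sub_one]

end NegSeries

open Matrix in
theorem Matrix.commute_entry_of_commutator_eq {R n : Type*} [Ring R] [Fintype n] [DecidableEq n]
    {S T : Matrix n n R} (hST : S * T = 1) (hTS : T * S = 1) (c : R) (U V : n → R) (i j : n)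
    (hT : ∀ h l, c * T h l - T h l * c = U h * T i l - T h j * V l)
    {a b : n} (ha : a ≠ j) (hb : b ≠ i) : Commute c (S a b) := by
  set D : Matrix n n R := diagonal fun _ => c
  have hDT : D * T - T * D = vecMulVec U (T i) - vecMulVec (fun h => T h j) V := by
    ext h l
    simp [D, diagonal_mul, mul_diagonal, vecMulVec_apply, hT]
  have hDS : D * S - S * D = -(S * (D * T - T * D) * S) := by
    simp only [mul_sub, sub_mul, mul_assoc, hTS, mul_one]
    simp only [← mul_assoc, hST, one_mul]
    abel
  have hrow : T i ᵥ* S = Pi.single i 1 := by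
    ext b
    change (T * S) i b = _
    simp [hTS, one_apply, Pi.single_apply, eq_comm]
  have hcol : S *ᵥ (fun h => T h j) = Pi.single j 1 := by
    ext a
    change (S * T) a j = _
    simp [hST, one_apply, Pi.single_apply]
  have hab := congrFun (congrFun hDS a) b
  rw [hDT, mul_sub, sub_mul, mul_vecMulVec, mul_vecMulVec, vecMulVec_mul,
    vecMulVec_mul, hrow, hcol] at hab
  show c * S a b = S a b * c
  simpa [D, diagonal_mul, mul_diagonal, vecMulVec_apply, ha, hb, sub_eq_zero]
    using hab

theorem AlgHom.range_eq_adjoin_image {R A B : Type*} [CommSemiring R] [Semiring A] [Semiring B]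
    [Algebra R A] [Algebra R B] {s : Set A} (hs : Algebra.adjoin R s = ⊤) (f : A →ₐ[R] B) :
    f.range = Algebra.adjoin R (f '' s) := by
  rw [Algebra.adjoin_image, hs, Algebra.map_top]

section Yangian

variable (p : I → Bool)

theorem tY_mul_tY (i j h l : I) (r s : ℕ) :
    tY p i j r * tY p h l s =
      sgn ((p i != p j) && (p h != p l)) • (tY p h l s * tY p i j r)
        + sgn (((p i && p j) != (p i && p h)) != (p j && p h)) •
          ∑ t ∈ range (min r s),
            (tY p h j t * tY p i l (r + s - 1 - t) - tY p h j (r + s - 1 - t) * tY p i l t) := by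
  simpa only [tY, map_mul, map_add, map_smul, map_sum, map_sub] using
    RingQuot.mkAlgHom_rel ℂ (YRel.rel (p := p) i j h l r s)

theorem tY_mul_sub_mul_of_even {i j : I} (hi : p i = false) (hj : p j = false) (h l : I)
    (r s : ℕ) :
    tY p i j r * tY p h l s - tY p h l s * tY p i j r =
      ∑ t ∈ range (min r s),
        (tY p h j t * tY p i l (r + s - 1 - t) - tY p h j (r + s - 1 - t) * tY p i l t) := by
  rw [tY_mul_tY, hi, hj]
  simp [sgn]

theorem adjoin_range_tY_eq_top :
    Algebra.adjoin ℂ (Set.range fun g : I × I × ℕ => tY p g.1 g.2.1 (g.2.2 + 1)) = ⊤ := by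
  have hgen : (Set.range fun g : I × I × ℕ => tY p g.1 g.2.1 (g.2.2 + 1)) =
      RingQuot.mkAlgHom ℂ (YRel p) '' Set.range (FreeAlgebra.ι ℂ) := by
    rw [← Set.range_comp]; rfl
  rw [hgen, Algebra.adjoin_image, FreeAlgebra.adjoin_range_ι, Algebra.map_top,
    AlgHom.range_eq_top]
  exact RingQuot.mkAlgHom_surjective ℂ _

theorem C_tY_mul_negSer_tY_sub {i j : I} (hi : p i = false) (hj : p j = false)
    (r : ℕ) (h l : I) :
    C (tY p i j r) * negSer (tY p h l) - negSer (tY p h l) * C (tY p i j r) =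
      X * (negSer (fun m => tY p h j (m + r)) * negSer (tY p i l)
        - negSer (tY p h j) * negSer fun m => tY p i l (m + r)) :=
  C_mul_negSer_sub_negSer_mul_C (tY_mul_sub_mul_of_even p hi hj h l r)

theorem commute_tY_coeff_of_mul_eq_one [Fintype I]
    {S : Matrix I I (PowerSeries (Yangian p))}
    (hST : S * Matrix.of (fun h l => negSer (tY p h l)) = 1)
    (hTS : Matrix.of (fun h l => negSer (tY p h l)) * S = 1)
    {i j a b : I} (hi : p i = false) (hj : p j = false) (ha : a ≠ j) (hb : b ≠ i) (r s : ℕ) :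
    Commute (tY p i j r) (coeff s (S a b)) := by
  have hC := Matrix.commute_entry_of_commutator_eq hST hTS (C (tY p i j r))
    (fun h => X * negSer fun m => tY p h j (m + r)) (fun l => X * negSer fun m => tY p i l (m + r))
    i j (fun h l => by
      simp only [Matrix.of_apply, C_tY_mul_negSer_tY_sub p hi hj, mul_sub, ← mul_assoc,
        (commute_X _).eq])
    ha hb
  simpa only [Commute, SemiconjBy, coeff_C_mul, coeff_mul_C] using congrArg (coeff s) hC.eq

end Yangian

theorem commute_tY_omega_tY {K N : ℕ} {ω : Ystd K N →+* Ystd K N} (hω : IsOmega K N ω)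
    {i j a b : Fin (K + N)} (hi : (i : ℕ) < K) (hj : (j : ℕ) < K) (ha : a ≠ j) (hb : b ≠ i)
    (r s : ℕ) : Commute (tY (stdP K N) i j r) (ω (tY (stdP K N) a b s)) := by
  have heven : ∀ i : Fin (K + N), (i : ℕ) < K → stdP K N i = false := fun i hi => by
    simpa [stdP] using hi
  simpa [Tstd, tSer] using
    commute_tY_coeff_of_mul_eq_one _ hω.1 hω.2 (heven i hi) (heven j hj) ha hb r s

/-- All elements of `Y(gl_k)` are even, so their supercommutator with `y` is `x * y - y * x`. -/
theorem yangian_glk_commutes_with_psi_image_general (M N k : ℕ)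
    (φ : Ystd M N →ₐ[ℂ] Ystd (k + M) N) (hφ : IsPhi M N k ⇑φ)
    (ω₁ : Ystd M N ≃ₐ[ℂ] Ystd M N)
    (ω₂ : Ystd (k + M) N ≃ₐ[ℂ] Ystd (k + M) N)
    (hω₂ : IsOmega (k + M) N ω₂.toAlgHom.toRingHom) :
    ∀ x ∈ Algebra.adjoin ℂ
        {z : Ystd (k + M) N | ∃ (i j : Fin (k + M + N)) (r : ℕ),
          (i : ℕ) < k ∧ (j : ℕ) < k ∧ z = tY (stdP (k + M) N) i j (r + 1)},
      ∀ y ∈ (ω₂.toAlgHom.comp (φ.comp ω₁.toAlgHom)).range,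
        x * y - y * x = 0 := by
  intro x hx y hy
  have hy_adj : y ∈ Algebra.adjoin ℂ {z | ∃ (a b : Fin (k + M + N)) (s : ℕ),
      k ≤ (a : ℕ) ∧ k ≤ (b : ℕ) ∧ z = ω₂ (tY (stdP (k + M) N) a b s)} := by
    have hy_range := AlgHom.range_comp_le_range ω₁.toAlgHom (ω₂.toAlgHom.comp φ) hy
    rw [AlgHom.range_eq_adjoin_image (adjoin_range_tY_eq_top _)] at hy_range
    refine Algebra.adjoin_mono ?_ hy_range
    rintro _ ⟨_, ⟨g, rfl⟩, rfl⟩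
    exact ⟨_, _, _, Nat.le_add_right _ _, Nat.le_add_right _ _, congrArg ω₂ (hφ _ _ _)⟩
  rw [sub_eq_zero]
  refine Algebra.commute_of_mem_adjoin_of_forall_mem_commute hy_adj ?_
  rintro _ ⟨a, b, s, ha, hb, rfl⟩
  refine (Algebra.commute_of_mem_adjoin_of_forall_mem_commute hx ?_).symm
  rintro _ ⟨i, j, r, hi, hj, rfl⟩
  exact (commute_tY_omega_tY hω₂ (by omega) (by omega) (Fin.ne_of_val_ne (by omega))
    (Fin.ne_of_val_ne (by omega)) (r + 1) s).symm

/-- **Lemma 4.3.** Inside `Y(gl_{k+M|N})`, the subalgebra `Y(gl_k)` generated by the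
elements `t_{ij}^{(r)}` with `i, j ≤ k`, `r ≥ 1`, and the subalgebra
`ψ_k(Y(gl_{M|N}))` supercommute with each other.  (All elements of `Y(gl_k)` are even,
so the supercommutator of `x` and `y` is `xy - yx`.) -/
theorem yangian_glk_commutes_with_psi_image (M N k : ℕ)
    (φ : Ystd M N →ₐ[ℂ] Ystd (k + M) N) (hφ : IsPhi M N k ⇑φ)
    (ω₁ : Ystd M N ≃ₐ[ℂ] Ystd M N) (hω₁ : IsOmega M N ω₁.toAlgHom.toRingHom)
    (ω₂ : Ystd (k + M) N ≃ₐ[ℂ] Ystd (k + M) N)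
    (hω₂ : IsOmega (k + M) N ω₂.toAlgHom.toRingHom) :
    ∀ x ∈ Algebra.adjoin ℂ
        {z : Ystd (k + M) N | ∃ (i j : Fin (k + M + N)) (r : ℕ),
          (i : ℕ) < k ∧ (j : ℕ) < k ∧ z = tY (stdP (k + M) N) i j (r + 1)},
      ∀ y ∈ (ω₂.toAlgHom.comp (φ.comp ω₁.toAlgHom)).range,
        x * y - y * x = 0 :=
  yangian_glk_commutes_with_psi_image_general M N k φ hφ ω₁ ω₂ hω₂

end
end
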